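/- Let p1, p7 ∈ ℂ[v,y] ⊂ S, q1, q7 ∈ ℂ[v] ⊂ S and k1, k7 ∈ ℂ. Set E1 = (−v²y² + p1·t)∂_y + q1·t·∂_v + k1·t·∂_t and E7 = (2vy + p7·t)∂_y + (−v² + q7·t)∂_v + k7·t·∂_t. If [E1,E7] ≡ 0 (mod t²), then −2v·q1 + v²·∂_v q1 + k1·q7 − k7·q1 = 0 in ℂ[v]; in particular, if k1 = k7 = 0 this gives −2v·q1 + v²·∂_v q1 = 0. -/

import Mathlib

open MvPolynomial

noncomputable section

/-- `S = ℂ[v,y,t]` with `v = X 0`, `y = X 1`, `t = X 2`. -/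
abbrev S : Type := MvPolynomial (Fin 3) ℂ

/-- The variable `v`. -/ def V : S := X 0
/-- The variable `y`. -/ def Y : S := X 1
/-- The variable `t`. -/ def T : S := X 2

/-- The derivation `f ∂_y + g ∂_v + h ∂_t` of `S = ℂ[v,y,t]`, determined by
`y ↦ f`, `v ↦ g`, `t ↦ h`. -/
def der (f g h : S) : Derivation ℂ S S :=
  MvPolynomial.mkDerivation ℂ ![g, f, h]

/-- The inclusion `ℂ[v,y] ⊂ S` (where in `ℂ[v,y]` the variable `X 0` is `v`
and `X 1` is `y`). -/
def ι2 : MvPolynomial (Fin 2) ℂ →ₐ[ℂ] S := aeval ![V, Y]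

/-- The inclusion `ℂ[v] ⊂ S`. -/
def ι1 : Polynomial ℂ →ₐ[ℂ] S := Polynomial.aeval V

/-- `D ≡ D' (mod t²)`: the difference sends `y`, `v`, `t` into the ideal `(t²)`. -/
def ModT2 (D D' : Derivation ℂ S S) : Prop :=
  ∀ i : Fin 3, (D - D') (X i) ∈ Ideal.span {T ^ 2}

lemma der_V (f g h : S) : der f g h V = g := by
  simp [der, V, mkDerivation_X]

lemma der_T (f g h : S) : der f g h T = h := by
  simp [der, T, mkDerivation_X]

lemma der_ι1 (f g h : S) (q : Polynomial ℂ) :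
    der f g h (ι1 q) = ι1 (Polynomial.derivative q) * g := by
  rw [ι1, Derivation.map_aeval, der_V, smul_eq_mul]

lemma ι1_X : ι1 Polynomial.X = V := Polynomial.aeval_X V

lemma ι1_C (c : ℂ) : ι1 (Polynomial.C c) = C c := Polynomial.aeval_C V c

lemma T_ne_zero : T ≠ 0 := X_ne_zero (2 : Fin 3)

/-- Setting `y = t = 0` is a retraction of `ι1`. -/
lemma eq_zero_of_ι1_mem_span_T {P : Polynomial ℂ} (hP : ι1 P ∈ Ideal.span {T}) : P = 0 := by
  obtain ⟨c, hc⟩ := Ideal.mem_span_singleton'.mp hP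
  let φ : S →ₐ[ℂ] Polynomial ℂ := aeval ![Polynomial.X, 0, 0]
  have hφι1 : φ (ι1 P) = P := by
    rw [ι1, ← Polynomial.aeval_algHom_apply]
    simp [φ, V]
  have hφT : φ T = 0 := by simp [φ, T]
  rw [← hφι1, ← hc, map_mul, hφT, mul_zero]

lemma mem_span_T_of_T_mul_mem {a : S} (ha : T * a ∈ Ideal.span {T ^ 2}) :
    a ∈ Ideal.span {T} := by
  obtain ⟨c, hc⟩ := Ideal.mem_span_singleton.mp ha
  rw [pow_two, mul_assoc] at hc
  exact Ideal.mem_span_singleton.mpr ⟨c, mul_left_cancel₀ T_ne_zero hc⟩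

/-- `[E1, E7](v)`, for `E1`, `E7` with arbitrary `∂_y`-coefficients. -/
lemma commutator_der_V (f1 f7 : S) (q1 q7 : Polynomial ℂ) (k1 k7 : ℂ) :
    ⁅der f1 (ι1 q1 * T) (C k1 * T), der f7 (-V ^ 2 + ι1 q7 * T) (C k7 * T)⁆ V =
      T * ι1 (-2 * Polynomial.X * q1 + Polynomial.X ^ 2 * Polynomial.derivative q1 +
          Polynomial.C k1 * q7 - Polynomial.C k7 * q1) +
        T ^ 2 * ι1 (Polynomial.derivative q7 * q1 - Polynomial.derivative q1 * q7) := by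
  rw [Derivation.commutator_apply, der_V, der_V, map_add, Derivation.leibniz,
    Derivation.map_neg, Derivation.leibniz_pow, Derivation.leibniz, der_V, der_T, der_T,
    der_ι1, der_ι1]
  simp only [map_add, map_sub, map_mul, map_neg, map_ofNat, map_pow, ι1_X, ι1_C, smul_eq_mul]
  push_cast
  ring

theorem bracket_E1_E7 (p1 p7 : MvPolynomial (Fin 2) ℂ) (q1 q7 : Polynomial ℂ)
    (k1 k7 : ℂ) (E1 E7 : Derivation ℂ S S)
    (hE1 : E1 = der (-V ^ 2 * Y ^ 2 + ι2 p1 * T) (ι1 q1 * T) (C k1 * T))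
    (hE7 : E7 = der (2 * V * Y + ι2 p7 * T) (-V ^ 2 + ι1 q7 * T) (C k7 * T))
    (h : ModT2 ⁅E1, E7⁆ 0) :
    (-2 * Polynomial.X * q1 + Polynomial.X ^ 2 * Polynomial.derivative q1 +
        Polynomial.C k1 * q7 - Polynomial.C k7 * q1 = 0) ∧
      (k1 = 0 → k7 = 0 →
        -2 * Polynomial.X * q1 + Polynomial.X ^ 2 * Polynomial.derivative q1 = 0) := by
  have hV : ⁅E1, E7⁆ V ∈ Ideal.span {T ^ 2} := by simpa [V] using h 0
  rw [hE1, hE7, commutator_der_V] at hV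
  have hmain := eq_zero_of_ι1_mem_span_T <| mem_span_T_of_T_mul_mem <|
    (Ideal.add_mem_iff_left _ (Ideal.mul_mem_right _ _ (Ideal.mem_span_singleton_self _))).mp hV
  refine ⟨hmain, fun h1 h7 => ?_⟩
  simpa [h1, h7] using hmain

end
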